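/- arXiv:2206.09884 — 4 statements merged into one kernel-verified Lean document; each statement's English description precedes it below -/
import Mathlib

section
/- Let G be a finite simple graph, let k > 0 be an integer, and let T ⊆ F ⊆ V(G) with T nonempty and G[T] connected. Suppose that every degree-1 vertex v of G satisfies F = {v} (the instance is almost leafless), and that |N_G(T)| > k(k+1). Then either G contains no k-secluded supertree of F, or there exists a vertex v ∈ V(G) \ F such that every k-secluded supertree H of F in G satisfies v ∈ N_G(H). -/
/-!
Fix a `k`-secluded supertree `H` of `F`. Every `u ∈ H ∩ N(T)` roots a branch of `H - T`, and
distinct roots have disjoint branches since `H` is acyclic and `G[T]` is connected. A leaf `x` of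
`G` would force `T = F = {x}` and `|N(T)| = 1`, so `G` has no leaves; hence each branch is adjacent
to `N(H)`, as otherwise the branch together with the `T`-neighbour of its root would be a tree
whose leaves other than that neighbour are leaves of `G`. Sending each root to such a vertex of
`N(H)`, and each vertex of `N(T) \ H` to itself, maps more than `k(k+1)` vertices to at most `k`,
so some `v ∈ N(H)` is adjacent to at least `k + 1` branches, or `k + 2` if `v ∉ N(T)`. If another
supertree `S` had `v ∉ N(S)`, each of these branches not contained in `S` would give its own vertex
of `N(S)`, while acyclicity of `S` allows at most one branch inside `S`, and none if `v ∈ N(T)`.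
-/

namespace Secluded

open SimpleGraph

variable {V : Type*}

/-- The open neighborhood of a vertex set `S`: vertices outside `S` with a neighbor in `S`. -/
def openNbhd (G : SimpleGraph V) (S : Set V) : Set V :=
  {v | v ∉ S ∧ ∃ u ∈ S, G.Adj v u}

/-- The graph obtained from `G` by deleting the vertices in `D`
(kept on the same vertex type; deleted vertices become isolated). -/
def gdelete (G : SimpleGraph V) (D : Set V) : SimpleGraph V where
  Adj x y := G.Adj x y ∧ x ∉ D ∧ y ∉ D
  symm := ⟨fun _ _ h => ⟨h.1.symm, h.2.2, h.2.1⟩⟩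
  loopless := ⟨fun x h => G.loopless.irrefl x h.1⟩

/-- `S` induces a tree (connected and acyclic induced subgraph) in `G`. -/
def IsInducedTree (G : SimpleGraph V) (S : Set V) : Prop :=
  (G.induce S).IsTree

/-- `S` is a `k`-secluded tree in `G`. -/
def IsSecludedTree (G : SimpleGraph V) (k : ℕ) (S : Set V) : Prop :=
  IsInducedTree G S ∧ (openNbhd G S).ncard ≤ k

/-- The set of `k`-secluded supertrees of `F` in `G`. -/
def secl (G : SimpleGraph V) (k : ℕ) (F : Set V) : Set (Set V) :=
  {S | IsSecludedTree G k S ∧ F ⊆ S}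

/-- Total weight of a vertex set. -/
noncomputable def weight (w : V → ℕ) (S : Set V) : ℕ := ∑ᶠ x ∈ S, w x

/-- The maximum-weight elements of a collection of vertex sets. -/
def maxset (w : V → ℕ) (X : Set (Set V)) : Set (Set V) :=
  {S | S ∈ X ∧ ∀ S' ∈ X, weight w S' ≤ weight w S}

/-- `S` consists of exactly one vertex from each member of `𝒳`. -/
def IsTransversal (𝒳 : Set (Set V)) (S : Set V) : Prop :=
  S ⊆ ⋃₀ 𝒳 ∧ ∀ X ∈ 𝒳, (S ∩ X).ncard = 1

/-- The vertex set of the connected component of `G − S` containing `r`. -/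
def component (G : SimpleGraph V) (S : Set V) (r : V) : Set V :=
  {x | (gdelete G S).Reachable r x}

/-- `(r, 𝒳)` is a description for `G`. -/
def IsDescription (G : SimpleGraph V) (r : V) (𝒳 : Set (Set V)) : Prop :=
  (∀ X ∈ 𝒳, r ∉ X) ∧ 𝒳.Pairwise Disjoint ∧
    ∀ S : Set V, IsTransversal 𝒳 S →
      (G.induce (component G S r)).IsAcyclic ∧ openNbhd G (component G S r) = S

/-- The induced tree (given by its vertex set `C`) is described by the description `D`. -/
def Describes (G : SimpleGraph V) (D : V × Set (Set V)) (C : Set V) : Prop :=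
  D.1 ∈ C ∧ IsTransversal D.2 (openNbhd G C)

/-- `𝒯_G(𝔛)`: the set of induced trees of `G` described by some member of `𝔛`. -/
def treesOf (G : SimpleGraph V) (𝔛 : Set (V × Set (Set V))) : Set (Set V) :=
  {C | IsInducedTree G C ∧ ∃ D ∈ 𝔛, Describes G D C}

/-- No induced tree of `G` is described by two distinct members of `𝔛`. -/
def NonRedundant (G : SimpleGraph V) (𝔛 : Set (V × Set (Set V))) : Prop :=
  ∀ C : Set V, IsInducedTree G C → ∀ D₁ ∈ 𝔛, ∀ D₂ ∈ 𝔛,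
    Describes G D₁ C → Describes G D₂ C → D₁ = D₂

/-- Degree of a vertex. -/
noncomputable def degOf (G : SimpleGraph V) (v : V) : ℕ := (G.neighborSet v).ncard

section Graph

variable {G : SimpleGraph V}

theorem eq_and_eq_of_isAcyclic_induce_union {X Y : Set V}
    (hac : (G.induce (X ∪ Y)).IsAcyclic) (hXY : Disjoint X Y)
    (hX : (G.induce X).Preconnected) (hY : (G.induce Y).Preconnected)
    {x₁ x₂ y₁ y₂ : V} (hx₁ : x₁ ∈ X) (hx₂ : x₂ ∈ X) (hy₁ : y₁ ∈ Y) (hy₂ : y₂ ∈ Y)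
    (h₁ : G.Adj x₁ y₁) (h₂ : G.Adj x₂ y₂) : x₁ = x₂ ∧ y₁ = y₂ := by
  by_contra hne
  set a₁ : ↥(X ∪ Y) := ⟨x₁, .inl hx₁⟩
  set b₁ : ↥(X ∪ Y) := ⟨y₁, .inr hy₁⟩
  have hbridge := isAcyclic_iff_forall_adj_isBridge.mp hac (v := a₁) (w := b₁) h₁
  rw [isBridge_iff] at hbridge
  set Γ := (G.induce (X ∪ Y)).deleteEdges {s(a₁, b₁)}
  -- Inside `X` and inside `Y` no walk uses the edge `x₁y₁`, so with `x₂y₂` they reconnect its ends.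
  have hlift : ∀ Z (hZ : Z ⊆ X ∪ Y), (x₁ ∉ Z ∨ y₁ ∉ Z) → (G.induce Z).Preconnected →
      ∀ a (ha : a ∈ Z) b (hb : b ∈ Z), Γ.Reachable ⟨a, hZ ha⟩ ⟨b, hZ hb⟩ := by
    intro Z hZ hZe hconn a ha b hb
    let f : G.induce Z →g Γ :=
      { toFun := Set.inclusion hZ
        map_rel' := fun {c d} h => by
          refine deleteEdges_adj.mpr ⟨h, ?_⟩
          simp only [Set.mem_singleton_iff, Sym2.eq_iff, Subtype.ext_iff]
          grind }
    exact (hconn ⟨a, ha⟩ ⟨b, hb⟩).map f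
  have hsep : ∀ {x}, x ∈ X → x ∉ Y := fun hx hy => hXY.notMem_of_mem_left hx hy
  have hadj : Γ.Adj ⟨x₂, .inl hx₂⟩ ⟨y₂, .inr hy₂⟩ := by
    refine deleteEdges_adj.mpr ⟨h₂, ?_⟩
    simp only [Set.mem_singleton_iff, Sym2.eq_iff, Subtype.ext_iff]
    grind
  exact hbridge (((hlift X Set.subset_union_left (.inr (hsep · hy₁)) hX x₁ hx₁ x₂ hx₂).trans
    hadj.reachable).trans (hlift Y Set.subset_union_right (.inl (hsep hx₁)) hY y₂ hy₂ y₁ hy₁))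

theorem exists_mem_support_mem_openNbhd {S : Set V} :
    ∀ {a b : V} (p : G.Walk a b), a ∉ S → b ∈ S → ∃ z ∈ p.support, z ∈ openNbhd G S
  | _, _, .nil, ha, hb => absurd hb ha
  | a, _, .cons (v := c) h p, ha, hb => by
    by_cases hc : c ∈ S
    · exact ⟨a, p.support.mem_cons_self, ha, c, hc, h⟩
    · obtain ⟨z, hz, hzS⟩ := exists_mem_support_mem_openNbhd p hc hb
      exact ⟨z, List.mem_cons_of_mem _ hz, hzS⟩

theorem exists_mem_openNbhd_of_preconnected {C S : Set V} (hC : (G.induce C).Preconnected)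
    {a b y : V} (ha : a ∈ C) (haS : a ∉ S) (hb : b ∈ C) (hy : y ∈ S) (hby : G.Adj b y) :
    ∃ z ∈ C, z ∈ openNbhd G S := by
  by_cases hbS : b ∈ S
  · obtain ⟨p⟩ := hC ⟨a, ha⟩ ⟨b, hb⟩
    obtain ⟨z, hz, hzS⟩ :=
      exists_mem_support_mem_openNbhd (p.map (Embedding.induce C).toHom) haS hbS
    rw [Walk.support_map] at hz
    obtain ⟨z, -, rfl⟩ := List.mem_map.mp hz
    exact ⟨z, z.2, hzS⟩
  · exact ⟨b, hb, hbS, y, hy, hby⟩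

theorem exists_ne_degOf_eq_one_of_isTree [Fintype V] {W : Set V} (hW : (G.induce W).IsTree)
    {t t' : V} (ht : t ∈ W) (ht' : t' ∈ W) (hne : t ≠ t')
    (hclosed : ∀ w ∈ W, w ≠ t → G.neighborSet w ⊆ W) : ∃ w ∈ W, w ≠ t ∧ degOf G w = 1 := by
  classical
  have : Nontrivial W := ⟨⟨t, ht⟩, ⟨t', ht'⟩, by simpa using hne⟩
  obtain ⟨a, b, hab, ha, hb⟩ := hW.exists_ne_and_degree_eq_one
  wlog hat : a.1 ≠ t generalizing a b
  · exact this b a hab.symm hb ha (fun hbt => hab (Subtype.ext ((not_not.mp hat).trans hbt.symm)))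
  obtain ⟨c, hac, hc⟩ := degree_eq_one_iff_existsUnique_adj.mp ha
  refine ⟨a, a.2, hat, Set.ncard_eq_one.mpr ⟨c, Set.eq_singleton_iff_unique_mem.mpr ⟨hac, ?_⟩⟩⟩
  intro x hx
  exact congrArg Subtype.val (hc ⟨x, hclosed a a.2 hat hx⟩ hx)

end Graph

section Component

variable {G : SimpleGraph V} {D : Set V} {r : V}

theorem gdelete_le (D : Set V) : gdelete G D ≤ G := fun _ _ h => h.1

theorem mem_component_self : r ∈ component G D r := Reachable.refl r

theorem component_subset_compl (hr : r ∉ D) : component G D r ⊆ Dᶜ := by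
  intro x hx
  obtain ⟨p⟩ := Reachable.symm hx
  cases p with
  | nil => exact hr
  | cons h _ => exact h.2.1

theorem mem_component_of_adj {c x : V} (hc : c ∈ component G D r) (hcD : c ∉ D) (hxD : x ∉ D)
    (h : G.Adj c x) : x ∈ component G D r :=
  Reachable.trans hc (Adj.reachable (G := gdelete G D) ⟨h, hcD, hxD⟩)

theorem preconnected_induce_component : (G.induce (component G D r)).Preconnected := by
  suffices h : ∀ x (hx : x ∈ component G D r),
      (G.induce (component G D r)).Reachable ⟨r, mem_component_self⟩ ⟨x, hx⟩ from
    fun x y => (h x x.2).symm.trans (h y y.2)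
  classical
  intro x hx
  obtain ⟨p⟩ := hx
  refine ⟨(p.map (Hom.ofLE (gdelete_le D))).induce _ fun y hy => ?_⟩
  rw [Walk.support_map] at hy
  obtain ⟨z, hz, rfl⟩ := List.mem_map.mp hy
  exact ⟨p.takeUntil z hz⟩

end Component

/-- The component of `H - T` containing `u`. -/
def branch (G : SimpleGraph V) (H T : Set V) (u : V) : Set V :=
  component G (H \ T)ᶜ u

section Branch

variable {G : SimpleGraph V} {H T : Set V}

theorem branch_subset {u : V} (hu : u ∈ H \ T) : branch G H T u ⊆ H \ T := by
  have := component_subset_compl (G := G) (D := (H \ T)ᶜ) (r := u) (not_not.mpr hu)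
  rwa [compl_compl] at this

variable (hHac : (G.induce H).IsAcyclic) (hTH : T ⊆ H) (hTconn : (G.induce T).Preconnected)
include hHac hTH hTconn

theorem eq_of_adj_of_mem_branch {u c t t' : V} (hu : u ∈ H \ T) (hc : c ∈ branch G H T u)
    (ht : t ∈ T) (ht' : t' ∈ T) (hut : G.Adj u t) (hct' : G.Adj c t') : c = u ∧ t' = t :=
  eq_and_eq_of_isAcyclic_induce_union
    (hHac.embedding (G.induceHomOfLE
      (Set.union_subset ((branch_subset hu).trans Set.sdiff_subset) hTH)))
    (Set.disjoint_of_subset_left (branch_subset hu) Set.disjoint_sdiff_left)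
    preconnected_induce_component hTconn hc mem_component_self ht' ht hct' hut

theorem disjoint_branch {u₁ u₂ : V} (hu₁ : u₁ ∈ H ∩ openNbhd G T) (hu₂ : u₂ ∈ H ∩ openNbhd G T)
    (hne : u₁ ≠ u₂) : Disjoint (branch G H T u₁) (branch G H T u₂) := by
  obtain ⟨hu₁H, hu₁T, t₁, ht₁, hu₁t₁⟩ := hu₁
  obtain ⟨-, -, t₂, ht₂, hu₂t₂⟩ := hu₂
  refine Set.disjoint_left.mpr fun z hz₁ hz₂ => hne ?_
  have hu₂ : u₂ ∈ branch G H T u₁ := Reachable.trans hz₁ (Reachable.symm hz₂)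
  exact (eq_of_adj_of_mem_branch hHac hTH hTconn ⟨hu₁H, hu₁T⟩ hu₂ ht₁ ht₂ hu₁t₁ hu₂t₂).1.symm

theorem exists_mem_branch_adj_openNbhd [Fintype V] (hnoleaf : ∀ x, degOf G x ≠ 1) {u : V}
    (hu : u ∈ H ∩ openNbhd G T) : ∃ c ∈ branch G H T u, ∃ y ∈ openNbhd G H, G.Adj c y := by
  obtain ⟨huH, huT, t, ht, hut⟩ := hu
  by_contra! hno
  have hsub := branch_subset (G := G) ⟨huH, huT⟩
  have htree : (G.induce (branch G H T u ∪ {t})).IsTree :=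
    ⟨connected_induce_union preconnected_induce_component Preconnected.of_subsingleton
        mem_component_self rfl hut,
      hHac.embedding (G.induceHomOfLE
        (Set.union_subset (hsub.trans Set.sdiff_subset) (Set.singleton_subset_iff.mpr (hTH ht))))⟩
  have hclosed : ∀ c ∈ branch G H T u ∪ {t}, c ≠ t →
      G.neighborSet c ⊆ branch G H T u ∪ {t} := by
    rintro c (hc | rfl) hct x (hcx : G.Adj c x)
    · by_cases hxH : x ∈ H
      · by_cases hxT : x ∈ T
        · exact .inr (eq_of_adj_of_mem_branch hHac hTH hTconn ⟨huH, huT⟩ hc ht hxT hut hcx).2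
        · exact .inl (mem_component_of_adj hc (not_not.mpr (hsub hc)) (not_not.mpr ⟨hxH, hxT⟩) hcx)
      · exact absurd hcx (hno c hc x ⟨hxH, c, (hsub hc).1, hcx.symm⟩)
    · exact absurd rfl hct
  obtain ⟨c, -, -, hc⟩ := exists_ne_degOf_eq_one_of_isTree htree (.inr rfl)
    (.inl mem_component_self) (fun htu => huT (htu ▸ ht)) hclosed
  exact hnoleaf c hc

end Branch

def BranchAdj (G : SimpleGraph V) (H T : Set V) (v u : V) : Prop :=
  u ∈ H ∩ openNbhd G T ∧ ∃ c ∈ branch G H T u, G.Adj c v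

section Pigeonhole

variable {G : SimpleGraph V} {H T : Set V}

theorem exists_many_branchAdj [Fintype V] {k : ℕ} (hTH : T ⊆ H) (hHk : (openNbhd G H).ncard ≤ k)
    (hbig : k * (k + 1) < (openNbhd G T).ncard)
    (hescape : ∀ u ∈ H ∩ openNbhd G T, ∃ c ∈ branch G H T u, ∃ y ∈ openNbhd G H, G.Adj c y) :
    ∃ v ∈ openNbhd G H, ∃ U : Finset V, (∀ u ∈ U, BranchAdj G H T v u) ∧
      k + 1 ≤ U.card ∧ (v ∉ openNbhd G T → k + 2 ≤ U.card) := by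
  classical
  choose! c hc y hy hcy using hescape
  -- Vertices of `N(T)` outside `H` already lie in `N(H)`; they are their own pigeonhole.
  let φ : V → V := fun w => if w ∈ H then y w else w
  have hφ : ∀ w ∈ (openNbhd G T).toFinset, φ w ∈ (openNbhd G H).toFinset := by
    intro w hw
    rw [Set.mem_toFinset] at hw ⊢
    by_cases hwH : w ∈ H
    · simpa only [φ, if_pos hwH] using hy w ⟨hwH, hw⟩
    · obtain ⟨-, t, ht, hwt⟩ := hw
      simpa only [φ, if_neg hwH] using ⟨hwH, t, hTH ht, hwt⟩
  have hcard : (openNbhd G H).toFinset.card * (k + 1) < (openNbhd G T).toFinset.card := by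
    rw [← Set.ncard_eq_toFinset_card', ← Set.ncard_eq_toFinset_card']
    exact (Nat.mul_le_mul_right _ hHk).trans_lt hbig
  obtain ⟨v, hv, hfiber⟩ := Finset.exists_lt_card_fiber_of_mul_lt_card_of_maps_to hφ hcard
  set P := {w ∈ (openNbhd G T).toFinset | φ w = v}
  have hP : ∀ w ∈ P, w ∈ openNbhd G T ∧ φ w = v := by simp [P]
  have hout : P.filter (· ∉ H) ⊆ {v} := fun w hw => by
    obtain ⟨hwP, hwH⟩ := Finset.mem_filter.mp hw
    simpa [φ, hwH] using (hP w hwP).2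
  have hout' : v ∉ openNbhd G T → P.filter (· ∉ H) = ∅ := fun hvT => by
    refine Finset.eq_empty_of_forall_notMem fun w hw => hvT ?_
    obtain ⟨hwP, hwH⟩ := Finset.mem_filter.mp hw
    obtain ⟨hwT, hφw⟩ := hP w hwP
    simpa only [φ, if_neg hwH, ← hφw] using hwT
  have hsplit := P.card_filter_add_card_filter_not (· ∈ H)
  refine ⟨v, Set.mem_toFinset.mp hv, P.filter (· ∈ H), fun u hu => ?_, ?_, fun hvT => ?_⟩
  · obtain ⟨huP, huH⟩ := Finset.mem_filter.mp hu
    obtain ⟨huT, hφu⟩ := hP u huP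
    refine ⟨⟨huH, huT⟩, c u, hc u ⟨huH, huT⟩, ?_⟩
    simpa only [← hφu, φ, if_pos huH] using hcy u ⟨huH, huT⟩
  · have := Finset.card_le_card hout
    simp only [Finset.card_singleton] at this
    omega
  · simp only [hout' hvT, Finset.card_empty] at hsplit
    omega

end Pigeonhole

section Forcing

variable {G : SimpleGraph V} {H T S : Set V} {U : Finset V}
variable (hHac : (G.induce H).IsAcyclic) (hTH : T ⊆ H) (hTconn : (G.induce T).Preconnected)
  (hTS : T ⊆ S)
include hHac hTH hTconn hTS

theorem card_le_ncard_openNbhd [Fintype V] (hU : ∀ u ∈ U, u ∈ H ∩ openNbhd G T)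
    (hUS : ∀ u ∈ U, ¬branch G H T u ⊆ S) : U.card ≤ (openNbhd G S).ncard := by
  classical
  have hexit : ∀ u ∈ U, ∃ z ∈ branch G H T u, z ∈ openNbhd G S := by
    intro u hu
    obtain ⟨-, -, t, ht, hut⟩ := hU u hu
    obtain ⟨a, ha, haS⟩ := Set.not_subset.mp (hUS u hu)
    exact exists_mem_openNbhd_of_preconnected preconnected_induce_component ha haS
      mem_component_self (hTS ht) hut
  choose! z hz hzS using hexit
  rw [Set.ncard_eq_toFinset_card']
  refine Finset.card_le_card_of_injOn z (fun u hu => Set.mem_toFinset.mpr (hzS u hu)) ?_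
  intro u₁ hu₁ u₂ hu₂ heq
  by_contra hne
  exact (disjoint_branch hHac hTH hTconn (hU u₁ hu₁) (hU u₂ hu₂) hne).notMem_of_mem_left
    (hz u₁ hu₁) (heq ▸ hz u₂ hu₂)

variable {v : V} (hvH : v ∉ H) (hSac : (G.induce S).IsAcyclic) (hvS : v ∉ openNbhd G S)
include hvH hSac hvS

theorem eq_of_branch_subset {u₁ u₂ : V} (hu₁ : BranchAdj G H T v u₁) (hu₂ : BranchAdj G H T v u₂)
    (hsub₁ : branch G H T u₁ ⊆ S) (hsub₂ : branch G H T u₂ ⊆ S) : u₁ = u₂ := by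
  obtain ⟨hu₁, c₁, hc₁, hc₁v⟩ := hu₁
  obtain ⟨hu₂, c₂, hc₂, hc₂v⟩ := hu₂
  obtain ⟨-, t₁, ht₁, hu₁t₁⟩ := hu₁.2
  obtain ⟨-, t₂, ht₂, hu₂t₂⟩ := hu₂.2
  by_contra hne
  have hvS' : v ∈ S := by_contra fun h => hvS ⟨h, c₁, hsub₁ hc₁, hc₁v.symm⟩
  set Y := branch G H T u₁ ∪ T ∪ branch G H T u₂
  have hY : (G.induce Y).Preconnected :=
    (connected_induce_union
      (connected_induce_union preconnected_induce_component hTconn mem_component_self ht₁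
        hu₁t₁).preconnected
      preconnected_induce_component (.inr ht₂) mem_component_self hu₂t₂.symm).preconnected
  have hYH : Y ⊆ H := Set.union_subset (Set.union_subset
    ((branch_subset ⟨hu₁.1, hu₁.2.1⟩).trans Set.sdiff_subset) hTH)
    ((branch_subset ⟨hu₂.1, hu₂.2.1⟩).trans Set.sdiff_subset)
  have hac : (G.induce ({v} ∪ Y)).IsAcyclic := hSac.embedding (G.induceHomOfLE
    (Set.union_subset (Set.singleton_subset_iff.mpr hvS')
      (Set.union_subset (Set.union_subset hsub₁ hTS) hsub₂)))
  have hc : c₁ = c₂ := (eq_and_eq_of_isAcyclic_induce_union hac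
    (Set.disjoint_singleton_left.mpr fun hv => hvH (hYH hv)) Preconnected.of_subsingleton hY
    rfl rfl (.inl (.inl hc₁)) (.inr hc₂) hc₁v.symm hc₂v.symm).2
  exact (disjoint_branch hHac hTH hTconn hu₁ hu₂ hne).notMem_of_mem_left hc₁ (hc ▸ hc₂)

omit hHac in
theorem not_branch_subset_of_mem_openNbhd (hvT : v ∈ openNbhd G T) {u : V}
    (hu : BranchAdj G H T v u) : ¬branch G H T u ⊆ S := by
  intro hsub
  obtain ⟨⟨huH, huT, t, ht, hut⟩, c, hc, hcv⟩ := hu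
  obtain ⟨-, t', ht', hvt'⟩ := hvT
  have hvS' : v ∈ S := by_contra fun h => hvS ⟨h, c, hsub hc, hcv.symm⟩
  have hbranch := branch_subset (G := G) ⟨huH, huT⟩
  have hac : (G.induce ({v} ∪ (branch G H T u ∪ T))).IsAcyclic := hSac.embedding
    (G.induceHomOfLE (Set.union_subset (Set.singleton_subset_iff.mpr hvS')
      (Set.union_subset hsub hTS)))
  have hct' : c = t' := (eq_and_eq_of_isAcyclic_induce_union hac
    (Set.disjoint_singleton_left.mpr fun hv =>
      hvH (Set.union_subset (hbranch.trans Set.sdiff_subset) hTH hv))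
    Preconnected.of_subsingleton
    (connected_induce_union preconnected_induce_component hTconn mem_component_self ht
      hut).preconnected
    rfl rfl (.inl hc) (.inr ht') hcv.symm hvt').2
  exact (hbranch hc).2 (hct' ▸ ht')

theorem card_le_of_forall_branchAdj [Fintype V] (hU : ∀ u ∈ U, BranchAdj G H T v u) :
    U.card ≤ (openNbhd G S).ncard + 1 ∧
      (v ∈ openNbhd G T → U.card ≤ (openNbhd G S).ncard) := by
  classical
  have hout := card_le_ncard_openNbhd hHac hTH hTconn hTS (U := U.filter (¬branch G H T · ⊆ S))
    (fun u hu => (hU u (Finset.mem_filter.mp hu).1).1) (fun u hu => (Finset.mem_filter.mp hu).2)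
  have hin : (U.filter (branch G H T · ⊆ S)).card ≤ 1 := Finset.card_le_one.mpr fun u₁ h₁ u₂ h₂ =>
    eq_of_branch_subset hHac hTH hTconn hTS hvH hSac hvS (hU u₁ (Finset.mem_filter.mp h₁).1)
      (hU u₂ (Finset.mem_filter.mp h₂).1) (Finset.mem_filter.mp h₁).2 (Finset.mem_filter.mp h₂).2
  have hsplit := U.card_filter_add_card_filter_not (branch G H T · ⊆ S)
  refine ⟨by omega, fun hvT => ?_⟩
  have hempty : U.filter (branch G H T · ⊆ S) = ∅ := Finset.filter_eq_empty_iff.mpr fun u hu =>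
    not_branch_subset_of_mem_openNbhd hTH hTconn hTS hvH hSac hvS hvT (hU u hu)
  rw [hempty, Finset.card_empty] at hsplit
  omega

end Forcing

theorem openNbhd_singleton {G : SimpleGraph V} (x : V) : openNbhd G {x} = G.neighborSet x := by
  ext y
  simp only [openNbhd, Set.mem_singleton_iff, exists_eq_left, mem_neighborSet]
  exact ⟨fun h => h.2.symm, fun h => ⟨h.ne', h.symm⟩⟩

/-- in an almost leafless instance with `k > 0` and `|N_G(T)| > k(k+1)`,
either `G` has no `k`-secluded supertree of `F`, or there is a vertex `v ∉ F` lying in the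
open neighborhood of every `k`-secluded supertree of `F` in `G`. -/
theorem exists_forced_neighborhood_vertex [Fintype V] (G : SimpleGraph V) (k : ℕ)
    (hk : 0 < k) (T F : Set V) (hTF : T ⊆ F) (hT : T.Nonempty)
    (hTconn : (G.induce T).Connected)
    (hleaf : ∀ v : V, degOf G v = 1 → F = {v})
    (hbig : k * (k + 1) < (openNbhd G T).ncard) :
    secl G k F = ∅ ∨ ∃ v : V, v ∉ F ∧ ∀ S ∈ secl G k F, v ∈ openNbhd G S := by
  rcases (secl G k F).eq_empty_or_nonempty with hempty | ⟨H, ⟨hHtree, hHk⟩, hFH⟩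
  · exact Or.inl hempty
  have hTH := hTF.trans hFH
  have hnoleaf : ∀ x, degOf G x ≠ 1 := fun x hx => by
    rw [hT.subset_singleton_iff.mp (hleaf x hx ▸ hTF), openNbhd_singleton] at hbig
    have : k * (k + 1) < 1 := hx ▸ hbig
    nlinarith
  obtain ⟨v, hvH, U, hU, hUk, hUk'⟩ := exists_many_branchAdj hTH hHk hbig fun u hu =>
    exists_mem_branch_adj_openNbhd hHtree.2 hTH hTconn.preconnected hnoleaf hu
  refine Or.inr ⟨v, fun hvF => hvH.1 (hFH hvF), fun S ⟨⟨hStree, hSk⟩, hFS⟩ => ?_⟩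
  by_contra hvS
  have hUS := card_le_of_forall_branchAdj hHtree.2 hTH hTconn.preconnected (hTF.trans hFS) hvH.1
    hStree.2 hvS hU
  by_cases hvT : v ∈ openNbhd G T
  · have := hUS.2 hvT
    omega
  · have := hUk' hvT
    omega

end Secluded
end

section
/- Let G be a finite simple graph with positive vertex weights w, let k ≥ 1 be an integer, let F ⊆ V(G) be nonempty, and let v ∈ V(G) \ F. Let 𝔛 be a set of descriptions for G − v such that 𝒯_{G−v}(𝔛) = maxset_w(secl_{G−v}^{k−1}(F)) and such that v ∈ N_G(H) for every H ∈ 𝒯_{G−v}(𝔛). Then 𝒯_G({(r, 𝒳 ∪ {{v}}) : (r, 𝒳) ∈ 𝔛}) = maxset_w({H ∈ secl_G^{k}(F) : v ∈ N_G(H)}). -/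
/-!
Deleting `v` does not change the trees avoiding `v`, and it removes exactly `v` from their
neighbourhoods. So a tree `H` of `G` with `v ∈ N_G(H)` is `k`-secluded in `G` iff it is
`(k-1)`-secluded in `G − v`, and it is described by `(r, 𝒳 ∪ {{v}})` in `G` iff it is described
by `(r, 𝒳)` in `G − v`. Both sides of the claim are therefore maximum-weight elements of the
`(k-1)`-secluded supertrees of `F` in `G − v` having `v` as a neighbour; since every
maximum-weight `(k-1)`-secluded supertree has `v` as a neighbour, restricting to those does not
change the maximum.
-/

namespace Secluded

open SimpleGraph

variable {V : Type*}

lemma isTransversal_union_singleton_iff {𝒳 : Set (Set V)} {S : Set V} {v : V}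
    (h𝒳 : ∀ X ∈ 𝒳, v ∉ X) :
    IsTransversal (𝒳 ∪ {{v}}) S ↔ IsTransversal 𝒳 (S \ {v}) ∧ v ∈ S := by
  have hinter : (∀ X ∈ 𝒳, (S \ {v} ∩ X).ncard = 1) ↔ ∀ X ∈ 𝒳, (S ∩ X).ncard = 1 :=
    forall₂_congr fun X hX => by
      rw [← Set.inter_sdiff_right_comm, Set.sdiff_singleton_eq_self fun h => h𝒳 X hX h.2]
  have hsingle : (S ∩ {v}).ncard = 1 ↔ v ∈ S := by
    by_cases hv : v ∈ S
    · simp [hv]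
    · simp [Set.inter_singleton_eq_empty.2 hv, hv]
  rw [IsTransversal, IsTransversal, Set.union_singleton, Set.sUnion_insert, ← Set.sdiff_subset_iff,
    Set.forall_mem_insert, hsingle, hinter]
  tauto

section DeleteVertex

variable (G : SimpleGraph V) {v : V} {S : Set V}

lemma induce_gdelete_singleton (hv : v ∉ S) : (gdelete G {v}).induce S = G.induce S := by
  ext ⟨x, hx⟩ ⟨y, hy⟩
  simp only [comap_adj, Function.Embedding.coe_subtype, gdelete, Set.mem_singleton_iff]
  exact ⟨And.left, fun h => ⟨h, ne_of_mem_of_not_mem hx hv, ne_of_mem_of_not_mem hy hv⟩⟩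

lemma isInducedTree_gdelete_singleton_iff (hv : v ∉ S) :
    IsInducedTree (gdelete G {v}) S ↔ IsInducedTree G S := by
  rw [IsInducedTree, IsInducedTree, induce_gdelete_singleton G hv]

lemma openNbhd_gdelete_singleton (hv : v ∉ S) :
    openNbhd (gdelete G {v}) S = openNbhd G S \ {v} := by
  ext u
  simp only [openNbhd, gdelete, Set.mem_ofPred_eq, Set.mem_sdiff, Set.mem_singleton_iff]
  constructor
  · rintro ⟨hu, x, hxS, hadj, huv, -⟩
    exact ⟨⟨hu, x, hxS, hadj⟩, huv⟩
  · rintro ⟨⟨hu, x, hxS, hadj⟩, huv⟩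
    exact ⟨hu, x, hxS, hadj, huv, ne_of_mem_of_not_mem hxS hv⟩

lemma ncard_openNbhd_eq_ncard_openNbhd_gdelete_add_one [Finite V] (hv : v ∈ openNbhd G S) :
    (openNbhd G S).ncard = (openNbhd (gdelete G {v}) S).ncard + 1 := by
  rw [openNbhd_gdelete_singleton G hv.1, Set.ncard_sdiff_singleton_add_one hv]

lemma secl_sep_mem_openNbhd [Finite V] {k : ℕ} (hk : 1 ≤ k) (F : Set V) :
    {S ∈ secl G k F | v ∈ openNbhd G S} =
      {S ∈ {S ∈ secl (gdelete G {v}) (k - 1) F | v ∉ S} | v ∈ openNbhd G S} := by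
  ext S
  refine and_congr_left fun hvS => ?_
  have hcard : (openNbhd G S).ncard ≤ k ↔ (openNbhd (gdelete G {v}) S).ncard ≤ k - 1 := by
    rw [ncard_openNbhd_eq_ncard_openNbhd_gdelete_add_one G hvS]
    omega
  simp only [secl, IsSecludedTree, Set.mem_ofPred_eq, hcard,
    isInducedTree_gdelete_singleton_iff G hvS.1, hvS.1, not_false_eq_true, and_true]

lemma describes_union_singleton_iff {D : V × Set (Set V)} {C : Set V}
    (hD : ∀ X ∈ D.2, v ∉ X) :
    Describes G (D.1, D.2 ∪ {{v}}) C ↔ Describes (gdelete G {v}) D C ∧ v ∈ openNbhd G C := by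
  simp only [Describes, isTransversal_union_singleton_iff hD]
  constructor
  · rintro ⟨hr, htr, hv⟩
    rw [openNbhd_gdelete_singleton G hv.1]
    exact ⟨⟨hr, htr⟩, hv⟩
  · rintro ⟨⟨hr, htr⟩, hv⟩
    rw [openNbhd_gdelete_singleton G hv.1] at htr
    exact ⟨hr, htr, hv⟩

lemma treesOf_union_singleton (𝔛 : Set (V × Set (Set V))) (h𝔛 : ∀ D ∈ 𝔛, ∀ X ∈ D.2, v ∉ X) :
    treesOf G {E | ∃ D ∈ 𝔛, E = (D.1, D.2 ∪ {({v} : Set V)})} =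
      {C ∈ treesOf (gdelete G {v}) 𝔛 | v ∈ openNbhd G C} := by
  ext C
  simp only [treesOf, Set.mem_ofPred_eq]
  constructor
  · rintro ⟨htree, _, ⟨D, hD, rfl⟩, hdesc⟩
    obtain ⟨hdesc, hv⟩ := (describes_union_singleton_iff G (h𝔛 D hD)).1 hdesc
    exact ⟨⟨(isInducedTree_gdelete_singleton_iff G hv.1).2 htree, D, hD, hdesc⟩, hv⟩
  · rintro ⟨⟨htree, D, hD, hdesc⟩, hv⟩
    exact ⟨(isInducedTree_gdelete_singleton_iff G hv.1).1 htree, _, ⟨D, hD, rfl⟩,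
      (describes_union_singleton_iff G (h𝔛 D hD)).2 ⟨hdesc, hv⟩⟩

end DeleteVertex

lemma maxset_sep_of_forall_mem_maxset {w : V → ℕ} {A : Set (Set V)} {p : Set V → Prop}
    (hA : A.Finite) (hp : ∀ S ∈ maxset w A, p S) : maxset w {S ∈ A | p S} = maxset w A := by
  ext S
  constructor
  · rintro ⟨⟨hSA, -⟩, hmax⟩
    obtain ⟨M, hM, hMmax⟩ := Set.exists_max_image A (weight w) hA ⟨S, hSA⟩
    exact ⟨hSA, fun S' hS' => (hMmax S' hS').trans (hmax M ⟨hM, hp M ⟨hM, hMmax⟩⟩)⟩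
  · intro hS
    exact ⟨⟨hS.1, hp S hS⟩, fun S' hS' => hS.2 S' hS'.1⟩

theorem combine_descriptions_general [Fintype V] (G : SimpleGraph V) (w : V → ℕ)
    (k : ℕ) (hk : 1 ≤ k)
    (F : Set V) (v : V)
    (𝔛 : Set (V × Set (Set V)))
    (havoid : ∀ D ∈ 𝔛, D.1 ≠ v ∧ ∀ X ∈ D.2, v ∉ X)
    (hT : treesOf (gdelete G {v}) 𝔛 =
      maxset w {S ∈ secl (gdelete G {v}) (k - 1) F | v ∉ S})
    (hvN : ∀ S ∈ treesOf (gdelete G {v}) 𝔛, v ∈ openNbhd G S) :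
    treesOf G {E | ∃ D ∈ 𝔛, E = (D.1, D.2 ∪ {({v} : Set V)})} =
      maxset w {S ∈ secl G k F | v ∈ openNbhd G S} := by
  have htrees : treesOf G {E | ∃ D ∈ 𝔛, E = (D.1, D.2 ∪ {({v} : Set V)})} =
      treesOf (gdelete G {v}) 𝔛 := by
    rw [treesOf_union_singleton G 𝔛 fun D hD => (havoid D hD).2]
    exact Set.sep_eq_self_iff_mem_true.2 hvN
  rw [htrees, hT, secl_sep_mem_openNbhd G hk F]
  exact (maxset_sep_of_forall_mem_maxset (Set.toFinite _) fun S hS => hvN S (hT ▸ hS)).symm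

/-- combining step: if `𝔛` are descriptions for `G − v` describing exactly
the maximum-weight `(k−1)`-secluded supertrees of `F` in `G − v`, all of which have `v`
in their `G`-neighborhood, then adding the singleton part `{v}` to every description
describes exactly the maximum-weight `k`-secluded supertrees `H` of `F` in `G` with
`v ∈ N_G(H)`. -/
theorem combine_descriptions [Fintype V] (G : SimpleGraph V) (w : V → ℕ)
    (hw : ∀ x : V, 0 < w x) (k : ℕ) (hk : 1 ≤ k)
    (F : Set V) (hF : F.Nonempty) (v : V) (hv : v ∉ F)
    (𝔛 : Set (V × Set (Set V)))
    (hdesc : ∀ D ∈ 𝔛, IsDescription (gdelete G {v}) D.1 D.2)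
    (havoid : ∀ D ∈ 𝔛, D.1 ≠ v ∧ ∀ X ∈ D.2, v ∉ X)
    (hT : treesOf (gdelete G {v}) 𝔛 =
      maxset w {S ∈ secl (gdelete G {v}) (k - 1) F | v ∉ S})
    (hvN : ∀ S ∈ treesOf (gdelete G {v}) 𝔛, v ∈ openNbhd G S) :
    treesOf G {E | ∃ D ∈ 𝔛, E = (D.1, D.2 ∪ {({v} : Set V)})} =
      maxset w {S ∈ secl G k F | v ∈ openNbhd G S} :=
  combine_descriptions_general G w k hk F v 𝔛 havoid hT hvN

end Secluded
end

section
/- Let G be a finite simple graph and let P be a path in G such that every vertex of P has degree exactly 2 in G and N_G(V(P)) = {a, b} for two distinct vertices a, b. Let S ⊆ V(G) \ V(P) and r ∉ V(P) ∪ S be such that the connected component H of (G − V(P)) − S containing r is acyclic and contains both a and b. Then for every m ∈ V(P), the connected component of (G − S) − m containing r is acyclic, has vertex set V(H) ∪ (V(P) \ {m}), and has m in its open neighborhood. -/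
namespace Secluded

open SimpleGraph

variable {V : Type*}

/-!
An inner vertex of `P` has degree 2 and both of its path neighbors on `P`, so `P` is entered from
outside only at its ends `x` and `y`; as `N(V(P)) = {a, b}` with `a ≠ b`, each end has a neighbor
in `H`. Deleting only `m` therefore leaves `P - m` as two subpaths hanging on `H` by their outer
ends, so the component of `r` is `H ∪ (V(P) \ {m})`. It stays acyclic because the subpaths can be
added one vertex at a time, each new vertex having exactly one neighbor among those present.
-/

section

variable {G : SimpleGraph V}

lemma isAcyclic_induce_iff {T : Set V} :
    (G.induce T).IsAcyclic ↔
      ∀ ⦃u : V⦄ (c : G.Walk u u), c.IsCycle → ¬ ∀ z ∈ c.support, z ∈ T := by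
  refine ⟨fun hT u c hc hcT => ?_, fun h u c hc => ?_⟩
  · refine hT (c.induce T hcT) (Walk.IsCycle.of_map (f := (Embedding.induce T).toHom) ?_)
    rwa [Walk.map_induce]
  · refine h (c.map (Embedding.induce T).toHom)
      (hc.map (Embedding.induce (G := G) T).injective) ?_
    simp only [Walk.support_map, List.mem_map]
    rintro _ ⟨z, -, rfl⟩
    exact z.2

/-- A cycle through `v`, rotated to start at `v`, leaves and re-enters `v` through two distinct
neighbors. -/
lemma isAcyclic_induce_insert {T : Set V} {v : V} (hT : (G.induce T).IsAcyclic)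
    (hv : (G.neighborSet v ∩ T).Subsingleton) : (G.induce (insert v T)).IsAcyclic := by
  classical
  rw [isAcyclic_induce_iff] at hT ⊢
  intro u c hc hcT
  by_cases hvc : v ∈ c.support
  · set c' := c.rotate v hvc
    have hc' : c'.IsCycle := hc.rotate hvc
    have hmemT : ∀ w, G.Adj v w → w ∈ c'.support → w ∈ G.neighborSet v ∩ T := fun w hw hwc =>
      ⟨hw, (hcT w ((c.mem_support_rotate_iff v hvc).mp hwc)).resolve_left hw.ne'⟩
    exact hc'.snd_ne_penultimate <| hv
      (hmemT _ (c'.adj_snd hc'.not_nil) (c'.getVert_mem_support 1))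
      (hmemT _ (c'.adj_penultimate hc'.not_nil).symm (c'.getVert_mem_support _))
  · exact hT c hc fun z hz => (hcT z hz).resolve_left fun h => hvc (h ▸ hz)

lemma neighborSet_eq_pair_of_degOf_eq_two {z p q : V} (hz : degOf G z = 2) (hpq : p ≠ q)
    (hp : G.Adj z p) (hq : G.Adj z q) : G.neighborSet z = {p, q} := by
  have hcard : (G.neighborSet z).ncard = 2 := hz
  refine (Set.eq_of_subset_of_ncard_le ?_ ?_ (Set.finite_of_ncard_ne_zero (by omega))).symm
  · rintro w (rfl | rfl) <;> assumption
  · rw [hcard, Set.ncard_pair hpq]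

lemma gdelete_anti {D D' : Set V} (h : D' ⊆ D) : gdelete G D ≤ gdelete G D' :=
  fun _ _ huv => ⟨huv.1, fun hu => huv.2.1 (h hu), fun hv => huv.2.2 (h hv)⟩

lemma notMem_of_mem_component {D : Set V} {r v : V} (hr : r ∉ D) (hv : v ∈ component G D r) :
    v ∉ D := by
  obtain ⟨W⟩ := hv
  cases W.reverse with
  | nil => exact hr
  | cons h _ => exact h.2.1

lemma reachable_gdelete_of_walk {D : Set V} {u v : V} (W : G.Walk u v)
    (hW : ∀ z ∈ W.support, z ∉ D) : (gdelete G D).Reachable u v := by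
  induction W with
  | nil => rfl
  | cons h W ih =>
    simp only [Walk.support_cons, List.mem_cons, forall_eq_or_imp] at hW
    have hadj : (gdelete G D).Adj _ _ := ⟨h, hW.1, hW.2 _ W.start_mem_support⟩
    exact hadj.reachable.trans (ih hW.2)

lemma component_subset_of_adj_mem {D T : Set V} {r : V} (hr : r ∈ T)
    (hT : ∀ u ∈ T, ∀ v, (gdelete G D).Adj u v → v ∈ T) : component G D r ⊆ T := by
  rintro v ⟨W⟩
  induction W with
  | nil => exact hr
  | cons h _ ih => exact ih (hT _ hr _ h)

/-- Each vertex of `W` other than `m`, added in turn, has besides its predecessor only its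
successor as a neighbor. -/
lemma _root_.SimpleGraph.Walk.IsPath.isAcyclic_induce_union_support_diff_end {u m : V}
    {W : G.Walk u m} (hW : W.IsPath) (hdeg : ∀ z ∈ W.support, degOf G z = 2) {T : Set V}
    (hT : (G.induce T).IsAcyclic) (hWT : ∀ z ∈ W.support, z ∉ T) {c : V} (hc : c ∈ T)
    (hcu : G.Adj c u) : (G.induce (T ∪ ({z | z ∈ W.support} \ {m}))).IsAcyclic := by
  induction W generalizing T c with
  | @nil m =>
    rwa [show T ∪ ({z | z ∈ (Walk.nil : G.Walk m m).support} \ {m}) = T by ext; simp]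
  | @cons u u' m huu' W ih =>
    rw [Walk.cons_isPath_iff] at hW
    have hu'T : u' ∉ T := hWT u' (by simp)
    have hnbr : G.neighborSet u = {c, u'} := neighborSet_eq_pair_of_degOf_eq_two
      (hdeg u (by simp)) (fun h => hu'T (h ▸ hc)) hcu.symm huu'
    have hinsert : (G.induce (insert u T)).IsAcyclic := by
      refine isAcyclic_induce_insert hT (Set.subsingleton_of_subset_singleton (a := c) ?_)
      rintro w ⟨hw, hwT⟩
      rw [hnbr] at hw
      exact hw.resolve_right fun h => hu'T (h ▸ hwT)
    have hrec := ih hW.1 (fun z hz => hdeg z (by simp [hz])) hinsert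
      (fun z hz => by
        rintro (rfl | hzT)
        exacts [hW.2 hz, hWT z (by simp [hz]) hzT])
      (Set.mem_insert u T) huu'
    have hum : u ≠ m := fun h => hW.2 (h ▸ W.end_mem_support)
    have hset : insert u T ∪ ({z | z ∈ W.support} \ {m})
        = T ∪ ({z | z ∈ (Walk.cons huu' W).support} \ {m}) := by
      ext z
      simp only [Walk.support_cons, Set.mem_union, Set.mem_sdiff, Set.mem_ofPred_eq,
        List.mem_cons, Set.mem_insert_iff, Set.mem_singleton_iff]
      grind
    rwa [← hset]

section Path

variable {x y : V} {P : G.Walk x y}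

lemma _root_.SimpleGraph.Walk.IsPath.eq_of_mem_takeUntil_of_mem_dropUntil [DecidableEq V]
    (hP : P.IsPath) {u z : V} (hu : u ∈ P.support) (h₁ : z ∈ (P.takeUntil u hu).support)
    (h₂ : z ∈ (P.dropUntil u hu).support) : z = u := by
  have hnodup := hP.support_nodup
  rw [← P.take_spec hu, Walk.support_append] at hnodup
  rw [← Walk.cons_tail_support, List.mem_cons] at h₂
  exact h₂.resolve_right (List.disjoint_of_nodup_append hnodup h₁)

lemma _root_.SimpleGraph.Walk.IsPath.neighborSet_subset_support (hP : P.IsPath) {z : V}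
    (hz : z ∈ P.support) (hzx : z ≠ x) (hzy : z ≠ y) (hdeg : degOf G z = 2) :
    G.neighborSet z ⊆ {w | w ∈ P.support} := by
  obtain ⟨n, rfl, hn⟩ := Walk.mem_support_iff_exists_getVert.mp hz
  have hn0 : n ≠ 0 := by rintro rfl; exact hzx P.getVert_zero
  have hnl : n ≠ P.length := by rintro rfl; exact hzy P.getVert_length
  have hprev : G.Adj (P.getVert n) (P.getVert (n - 1)) := by
    simpa [Nat.sub_add_cancel (Nat.pos_of_ne_zero hn0)] using
      (P.adj_getVert_succ (i := n - 1) (by omega)).symm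
  have hnext : G.Adj (P.getVert n) (P.getVert (n + 1)) := P.adj_getVert_succ (by omega)
  have hne : P.getVert (n - 1) ≠ P.getVert (n + 1) := fun h => by
    have := hP.getVert_injOn (by simp only [Set.mem_ofPred_eq]; omega)
      (by simp only [Set.mem_ofPred_eq]; omega) h
    omega
  rw [neighborSet_eq_pair_of_degOf_eq_two hdeg hne hprev hnext]
  rintro w (rfl | rfl) <;> exact P.getVert_mem_support _

lemma _root_.SimpleGraph.Walk.IsPath.adj_start_or_adj_end (hP : P.IsPath)
    (hdeg : ∀ z ∈ P.support, degOf G z = 2) {w z : V} (hw : w ∉ P.support)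
    (hz : z ∈ P.support) (hwz : G.Adj w z) : G.Adj w x ∨ G.Adj w y := by
  by_cases hzx : z = x
  · exact .inl (hzx ▸ hwz)
  by_cases hzy : z = y
  · exact .inr (hzy ▸ hwz)
  exact (hw (hP.neighborSet_subset_support hz hzx hzy (hdeg z hz) hwz.symm)).elim

/-- If neither outer neighbor of the path were adjacent to `x`, both would be adjacent to `y`,
leaving no room at `y` for its predecessor on the path. -/
lemma _root_.SimpleGraph.Walk.IsPath.exists_openNbhd_adj_start (hP : P.IsPath)
    (hdeg : ∀ z ∈ P.support, degOf G z = 2) {a b : V} (hab : a ≠ b)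
    (hN : openNbhd G {z | z ∈ P.support} = {a, b}) :
    ∃ c ∈ openNbhd G {z | z ∈ P.support}, G.Adj c x := by
  by_contra! hx
  have hadj_end : ∀ c ∈ openNbhd G {z | z ∈ P.support}, G.Adj c y := fun c hc => by
    obtain ⟨hcP, z, hz, hcz⟩ := hc
    exact (hP.adj_start_or_adj_end hdeg hcP hz hcz).resolve_left (hx c ⟨hcP, z, hz, hcz⟩)
  have ha : a ∈ openNbhd G {z | z ∈ P.support} := hN ▸ Set.mem_insert a {b}
  have hb : b ∈ openNbhd G {z | z ∈ P.support} := hN ▸ Set.mem_insert_of_mem a rfl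
  have hxy : x ≠ y := fun h => hx a ha (h ▸ hadj_end a ha)
  have hnbr := neighborSet_eq_pair_of_degOf_eq_two (hdeg y P.end_mem_support) hab
    (hadj_end a ha).symm (hadj_end b hb).symm
  have hpen : P.penultimate ∈ G.neighborSet y :=
    (P.adj_penultimate (Walk.not_nil_of_ne hxy)).symm
  rw [hnbr, ← hN] at hpen
  exact hpen.1 (P.getVert_mem_support _)

lemma _root_.SimpleGraph.Walk.IsPath.exists_openNbhd_adj_end (hP : P.IsPath)
    (hdeg : ∀ z ∈ P.support, degOf G z = 2) {a b : V} (hab : a ≠ b)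
    (hN : openNbhd G {z | z ∈ P.support} = {a, b}) :
    ∃ c ∈ openNbhd G {z | z ∈ P.support}, G.Adj c y := by
  have hrev : {z | z ∈ P.reverse.support} = {z | z ∈ P.support} := by
    simp only [Walk.support_reverse, List.mem_reverse]
  rw [← hrev] at hN ⊢
  exact hP.reverse.exists_openNbhd_adj_start (by simpa using hdeg) hab hN

lemma _root_.SimpleGraph.Walk.IsPath.isAcyclic_induce_union_support_diff (hP : P.IsPath) (hdeg : ∀ z ∈ P.support, degOf G z = 2) {T : Set V}
    (hT : (G.induce T).IsAcyclic) (hPT : ∀ z ∈ P.support, z ∉ T) {c₁ c₂ : V} (hc₁ : c₁ ∈ T)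
    (hc₁x : G.Adj c₁ x) (hc₂ : c₂ ∈ T) (hc₂y : G.Adj c₂ y) {m : V} (hm : m ∈ P.support) :
    (G.induce (T ∪ ({z | z ∈ P.support} \ {m}))).IsAcyclic := by
  classical
  set P₁ := P.takeUntil m hm
  set P₂ := P.dropUntil m hm
  have hsplit : ∀ z, z ∈ P.support ↔ z ∈ P₁.support ∨ z ∈ P₂.support := fun z => by
    rw [← Walk.mem_support_append_iff, P.take_spec hm]
  have hP₁ : ∀ z ∈ P₁.support, z ∈ P.support := fun z hz => (hsplit z).mpr (.inl hz)
  have hP₂ : ∀ z ∈ P₂.reverse.support, z ∈ P.support := fun z hz =>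
    (hsplit z).mpr (.inr (by simpa using hz))
  have h₁ := (hP.takeUntil hm).isAcyclic_induce_union_support_diff_end
    (fun z hz => hdeg z (hP₁ z hz)) hT (fun z hz => hPT z (hP₁ z hz)) hc₁ hc₁x
  have h₂ := (hP.dropUntil hm).reverse.isAcyclic_induce_union_support_diff_end
    (fun z hz => hdeg z (hP₂ z hz)) h₁ (fun z hz => ?_) (Set.mem_union_left _ hc₂) hc₂y
  · have hset : T ∪ ({z | z ∈ P₁.support} \ {m}) ∪ ({z | z ∈ P₂.reverse.support} \ {m})
        = T ∪ ({z | z ∈ P.support} \ {m}) := by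
      ext z
      simp only [Set.mem_union, Set.mem_sdiff, Set.mem_ofPred_eq, Set.mem_singleton_iff, hsplit,
        Walk.support_reverse, List.mem_reverse]
      tauto
    rwa [← hset]
  · rintro (hzT | ⟨hz₁, hzm⟩)
    · exact hPT z (hP₂ z hz) hzT
    · exact hzm (hP.eq_of_mem_takeUntil_of_mem_dropUntil hm hz₁ (by simpa using hz))

lemma component_union_singleton_eq (hP : P.IsPath) {S : Set V}
    (hSP : Disjoint S {z | z ∈ P.support}) {r : V} (hr : r ∉ {z | z ∈ P.support} ∪ S)
    (hN : openNbhd G {z | z ∈ P.support} ⊆ component G ({z | z ∈ P.support} ∪ S) r)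
    {c₁ c₂ : V} (hc₁ : c₁ ∈ component G ({z | z ∈ P.support} ∪ S) r) (hc₁x : G.Adj c₁ x)
    (hc₂ : c₂ ∈ component G ({z | z ∈ P.support} ∪ S) r) (hc₂y : G.Adj c₂ y)
    {m : V} (hm : m ∈ P.support) :
    component G (S ∪ {m}) r =
      component G ({z | z ∈ P.support} ∪ S) r ∪ ({z | z ∈ P.support} \ {m}) := by
  classical
  set H := component G ({z | z ∈ P.support} ∪ S) r
  have hHD : ∀ v ∈ H, v ∉ {z | z ∈ P.support} ∪ S := fun v => notMem_of_mem_component hr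
  have hHD' : ∀ v ∈ H, v ∉ S ∪ {m} := by
    rintro v hv (hvS | rfl)
    exacts [hHD v hv (.inr hvS), hHD v hv (.inl hm)]
  have hPD : ∀ z ∈ P.support, z ≠ m → z ∉ S ∪ {m} := by
    rintro z hz hzm (hzS | rfl)
    exacts [Set.disjoint_left.mp hSP hzS hz, hzm rfl]
  have hH : H ⊆ component G (S ∪ {m}) r := fun v hv =>
    hv.mono (gdelete_anti (Set.union_subset Set.subset_union_right
      (Set.singleton_subset_iff.mpr (.inl hm))))
  apply subset_antisymm
  · refine component_subset_of_adj_mem (.inl (Reachable.refl r))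
      fun u hu v ⟨huv, _, hvD⟩ => ?_
    by_cases hvP : v ∈ P.support
    · exact .inr ⟨hvP, fun h => hvD (.inr h)⟩
    refine .inl ?_
    rcases hu with huH | ⟨huP, -⟩
    · refine huH.trans (Adj.reachable ⟨huv, hHD u huH, ?_⟩)
      rintro (h | h)
      exacts [hvP h, hvD (.inl h)]
    · exact hN ⟨hvP, u, huP, huv.symm⟩
  · rintro v (hvH | ⟨hvP, hvm⟩)
    · exact hH hvH
    by_cases hm₁ : m ∈ (P.takeUntil v hvP).support
    · have hm₂ : m ∉ (P.dropUntil v hvP).support := fun hm₂ =>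
        hvm (hP.eq_of_mem_takeUntil_of_mem_dropUntil hvP hm₁ hm₂).symm
      refine (hH hc₂).trans
        (reachable_gdelete_of_walk (.cons hc₂y (P.dropUntil v hvP).reverse) ?_)
      simp only [Walk.support_cons, Walk.support_reverse, List.mem_cons, List.mem_reverse]
      rintro z (rfl | hz)
      exacts [hHD' z hc₂, hPD z (P.support_dropUntil_subset_support hvP hz)
        (ne_of_mem_of_not_mem hz hm₂)]
    · refine (hH hc₁).trans (reachable_gdelete_of_walk (.cons hc₁x (P.takeUntil v hvP)) ?_)
      simp only [Walk.support_cons, List.mem_cons]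
      rintro z (rfl | hz)
      exacts [hHD' z hc₁, hPD z (P.support_takeUntil_subset_support hvP hz)
        (ne_of_mem_of_not_mem hz hm₁)]

lemma mem_openNbhd_union_support_diff {T : Set V} (hPT : ∀ z ∈ P.support, z ∉ T) {c : V}
    (hc : c ∈ T) (hcx : G.Adj c x) {m : V} (hm : m ∈ P.support) :
    m ∈ openNbhd G (T ∪ ({z | z ∈ P.support} \ {m})) := by
  classical
  refine ⟨fun h => h.elim (hPT m hm) fun h => h.2 rfl, ?_⟩
  by_cases hmx : m = x
  · exact ⟨c, .inl hc, hmx ▸ hcx.symm⟩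
  have hpen := Walk.adj_penultimate (Walk.not_nil_of_ne (Ne.symm hmx) : ¬ (P.takeUntil m hm).Nil)
  exact ⟨_, .inr ⟨P.support_takeUntil_subset_support hm (Walk.getVert_mem_support _ _),
    hpen.ne⟩, hpen.symm⟩

end Path

end

theorem path_component_swap_general (G : SimpleGraph V)
    (x y : V) (P : G.Walk x y) (hP : P.IsPath)
    (VP : Set V) (hVP : VP = {z | z ∈ P.support})
    (hdeg : ∀ z ∈ VP, degOf G z = 2)
    (a b : V) (hab : a ≠ b)
    (hNP : openNbhd G VP = {a, b})
    (S : Set V) (hSP : Disjoint S VP)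
    (r : V) (hrP : r ∉ VP) (hrS : r ∉ S)
    (H : Set V) (hH : H = component G (VP ∪ S) r)
    (hac : (G.induce H).IsAcyclic) (haH : a ∈ H) (hbH : b ∈ H) :
    ∀ m ∈ VP,
      (G.induce (component G (S ∪ {m}) r)).IsAcyclic ∧
      component G (S ∪ {m}) r = H ∪ (VP \ {m}) ∧
      m ∈ openNbhd G (component G (S ∪ {m}) r) := by
  subst hVP hH
  intro m hm
  have hr : r ∉ {z | z ∈ P.support} ∪ S := by rintro (h | h); exacts [hrP h, hrS h]
  have hN : openNbhd G {z | z ∈ P.support} ⊆ component G ({z | z ∈ P.support} ∪ S) r :=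
    hNP ▸ Set.insert_subset haH (Set.singleton_subset_iff.mpr hbH)
  have hPH : ∀ z ∈ P.support, z ∉ component G ({z | z ∈ P.support} ∪ S) r :=
    fun z hz hzH => notMem_of_mem_component hr hzH (.inl hz)
  obtain ⟨c₁, hc₁, hc₁x⟩ := hP.exists_openNbhd_adj_start hdeg hab hNP
  obtain ⟨c₂, hc₂, hc₂y⟩ := hP.exists_openNbhd_adj_end hdeg hab hNP
  rw [component_union_singleton_eq hP hSP hr hN (hN hc₁) hc₁x (hN hc₂) hc₂y hm]
  exact ⟨hP.isAcyclic_induce_union_support_diff hdeg hac hPH (hN hc₁) hc₁x (hN hc₂) hc₂y hm,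
    rfl, mem_openNbhd_union_support_diff hPH (hN hc₁) hc₁x hm⟩

/-- let `P` be a path of degree-2 vertices with `N_G(V(P)) = {a, b}`,
`a ≠ b`. If the component `H` of `(G − V(P)) − S` containing `r` is acyclic and contains
`a` and `b`, then for every `m ∈ V(P)` the component of `(G − S) − m` containing `r` is
acyclic, has vertex set `V(H) ∪ (V(P) \ {m})`, and has `m` in its open neighborhood. -/
theorem path_component_swap [Fintype V] (G : SimpleGraph V)
    (x y : V) (P : G.Walk x y) (hP : P.IsPath)
    (VP : Set V) (hVP : VP = {z | z ∈ P.support})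
    (hdeg : ∀ z ∈ VP, degOf G z = 2)
    (a b : V) (hab : a ≠ b)
    (hNP : openNbhd G VP = {a, b})
    (S : Set V) (hSP : Disjoint S VP)
    (r : V) (hrP : r ∉ VP) (hrS : r ∉ S)
    (H : Set V) (hH : H = component G (VP ∪ S) r)
    (hac : (G.induce H).IsAcyclic) (haH : a ∈ H) (hbH : b ∈ H) :
    ∀ m ∈ VP,
      (G.induce (component G (S ∪ {m}) r)).IsAcyclic ∧
      component G (S ∪ {m}) r = H ∪ (VP \ {m}) ∧
      m ∈ openNbhd G (component G (S ∪ {m}) r) :=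
  path_component_swap_general G x y P hP VP hVP hdeg a b hab hNP S hSP r hrP hrS H hH hac haH hbH

end Secluded
end

section
/- Let G be a finite simple graph and let (r, 𝒳) be a description for G. Then the map sending each transversal S of 𝒳 (a set consisting of exactly one vertex from each X ∈ 𝒳) to the connected component of G − S containing r is a bijection between the transversals of 𝒳 and the set of induced trees of G described by (r, 𝒳). In particular, the number of distinct induced trees of G described by (r, 𝒳) equals ∏_{X ∈ 𝒳} |X|. -/
namespace Secluded

open SimpleGraph

variable {V : Type*}

/-!
For a transversal `S`, the description gives `N(component S) = S`, so the component determines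
`S`; conversely an induced tree `C` containing `r` is the component of `r` in `G − N(C)`, and
`N(C)` is a transversal when `C` is described by `(r, 𝒳)`. Since the blocks of `𝒳` are
disjoint, transversals correspond to choice functions `∏ X ∈ 𝒳, X`.
-/

section Component

variable {G : SimpleGraph V} {S C : Set V} {r : V}

lemma component_eq_supp : component G S r = ((gdelete G S).connectedComponentMk r).supp := by
  ext x
  rw [ConnectedComponent.mem_supp_iff, ConnectedComponent.eq]
  exact reachable_comm

lemma gdelete_le_s15 : gdelete G S ≤ G := fun _ _ h => h.1

lemma connected_induce_component : (G.induce (component G S r)).Connected := by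
  rw [component_eq_supp]
  exact (ConnectedComponent.maximal_connected_induce_supp _).1.mono
    (comap_monotone _ gdelete_le_s15)

lemma mem_of_reachable_of_adj_closed {H : SimpleGraph V}
    (hC : ∀ u v, H.Adj u v → u ∈ C → v ∈ C) {a b : V} (hab : H.Reachable a b) (ha : a ∈ C) :
    b ∈ C := by
  obtain ⟨p⟩ := hab
  induction p with
  | nil => exact ha
  | cons h _ ih => exact ih (hC _ _ h ha)

lemma component_openNbhd (hconn : (G.induce C).Connected) (hr : r ∈ C) :
    component G (openNbhd G C) r = C := by
  refine Set.Subset.antisymm (fun x hx => ?_) (fun x hx => ?_)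
  · refine mem_of_reachable_of_adj_closed (fun u v h hu => ?_) hx hr
    by_contra hv
    exact h.2.2 ⟨hv, u, hu, h.1.symm⟩
  · let φ : G.induce C →g gdelete G (openNbhd G C) :=
      ⟨Subtype.val, fun {u v} h => ⟨h, fun hu => hu.1 u.2, fun hv => hv.1 v.2⟩⟩
    exact (hconn.preconnected ⟨r, hr⟩ ⟨x, hx⟩).map φ

end Component

section Transversal

variable {𝒳 : Set (Set V)}

def pick (f : ∀ X : 𝒳, (X : Set V)) : Set V := Set.range fun X => (f X : V)

lemma pick_inter (hdisj : 𝒳.Pairwise Disjoint) (f : ∀ X : 𝒳, (X : Set V)) (X : 𝒳) :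
    pick f ∩ X = {(f X : V)} := by
  ext v
  constructor
  · rintro ⟨⟨Y, rfl⟩, hv⟩
    by_cases hYX : Y = X
    · rw [hYX]; rfl
    · exact absurd hv
        (Set.disjoint_left.mp (hdisj Y.2 X.2 (fun h => hYX (Subtype.ext h))) (f Y).2)
  · rintro rfl
    exact ⟨⟨X, rfl⟩, (f X).2⟩

lemma isTransversal_pick (hdisj : 𝒳.Pairwise Disjoint) (f : ∀ X : 𝒳, (X : Set V)) :
    IsTransversal 𝒳 (pick f) := by
  refine ⟨?_, fun X hX => ?_⟩
  · rintro v ⟨X, rfl⟩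
    exact ⟨X, X.2, (f X).2⟩
  · rw [pick_inter hdisj f ⟨X, hX⟩, Set.ncard_singleton]

lemma pick_injective (hdisj : 𝒳.Pairwise Disjoint) :
    Function.Injective (pick (𝒳 := 𝒳)) := by
  intro f g hfg
  funext X
  have h := pick_inter hdisj f X
  rw [hfg, pick_inter hdisj g X] at h
  exact Subtype.ext (Set.singleton_eq_singleton_iff.mp h).symm

lemma exists_pick_eq {S : Set V} (hS : IsTransversal 𝒳 S) :
    ∃ f : ∀ X : 𝒳, (X : Set V), pick f = S := by
  choose a ha using fun X : 𝒳 => Set.ncard_eq_one.mp (hS.2 X X.2)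
  have hmem : ∀ X : 𝒳, a X ∈ S ∩ X := fun X => (ha X) ▸ rfl
  refine ⟨fun X => ⟨a X, (hmem X).2⟩, Set.Subset.antisymm ?_ fun v hv => ?_⟩
  · rintro _ ⟨X, rfl⟩
    exact (hmem X).1
  · obtain ⟨X, hX, hvX⟩ := hS.1 hv
    have h : v ∈ S ∩ X := ⟨hv, hvX⟩
    rw [ha ⟨X, hX⟩] at h
    exact ⟨⟨X, hX⟩, h.symm⟩

lemma ncard_setOf_isTransversal [Finite V] (hdisj : 𝒳.Pairwise Disjoint) :
    {S | IsTransversal 𝒳 S}.ncard = ∏ᶠ X ∈ 𝒳, X.ncard := by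
  have : Fintype 𝒳 := Fintype.ofFinite 𝒳
  have hrange : {S | IsTransversal 𝒳 S} = Set.range (pick (𝒳 := 𝒳)) :=
    Set.Subset.antisymm (fun _ hS => exists_pick_eq hS) (by
      rintro _ ⟨f, rfl⟩
      exact isTransversal_pick hdisj f)
  rw [hrange, Set.ncard_range_of_injective (pick_injective hdisj), Nat.card_pi,
    ← finprod_set_coe_eq_finprod_mem, finprod_eq_prod_of_fintype]
  simp only [Nat.card_coe_set_eq]

end Transversal

section Description

variable {G : SimpleGraph V} {r : V} {𝒳 : Set (Set V)} {S : Set V}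

lemma isInducedTree_component (hd : IsDescription G r 𝒳) (hS : IsTransversal 𝒳 S) :
    IsInducedTree G (component G S r) :=
  ⟨connected_induce_component, (hd.2.2 S hS).1⟩

lemma describes_component (hd : IsDescription G r 𝒳) (hS : IsTransversal 𝒳 S) :
    Describes G (r, 𝒳) (component G S r) :=
  ⟨Reachable.refl r, by rw [(hd.2.2 S hS).2]; exact hS⟩

lemma mapsTo_component (hd : IsDescription G r 𝒳) :
    Set.MapsTo (fun S => component G S r) {S | IsTransversal 𝒳 S}
      {C | IsInducedTree G C ∧ Describes G (r, 𝒳) C} := fun _ hS =>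
  ⟨isInducedTree_component hd hS, describes_component hd hS⟩

lemma injOn_component (hd : IsDescription G r 𝒳) :
    Set.InjOn (fun S => component G S r) {S | IsTransversal 𝒳 S} := fun S₁ h₁ S₂ h₂ heq => by
  rw [← (hd.2.2 S₁ h₁).2, ← (hd.2.2 S₂ h₂).2]
  exact congrArg (openNbhd G) heq

lemma surjOn_component :
    Set.SurjOn (fun S => component G S r) {S | IsTransversal 𝒳 S}
      {C | IsInducedTree G C ∧ Describes G (r, 𝒳) C} := by
  rintro C ⟨htree, hrC, hN⟩
  exact ⟨openNbhd G C, hN, component_openNbhd htree.connected hrC⟩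

end Description

/-- for a description `(r, 𝒳)` of `G`, the map sending a transversal `S`
of `𝒳` to the connected component of `G − S` containing `r` is a bijection onto the set
of induced trees of `G` described by `(r, 𝒳)`; in particular the number of described
trees equals `∏_{X ∈ 𝒳} |X|`. -/
theorem description_counts [Fintype V] (G : SimpleGraph V)
    (r : V) (𝒳 : Set (Set V)) (hd : IsDescription G r 𝒳) :
    Set.BijOn (fun S => component G S r) {S : Set V | IsTransversal 𝒳 S}
        {C : Set V | IsInducedTree G C ∧ Describes G (r, 𝒳) C} ∧
      {C : Set V | IsInducedTree G C ∧ Describes G (r, 𝒳) C}.ncard =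
        ∏ᶠ X ∈ 𝒳, X.ncard := by
  have hbij : Set.BijOn (fun S => component G S r) {S : Set V | IsTransversal 𝒳 S}
      {C : Set V | IsInducedTree G C ∧ Describes G (r, 𝒳) C} :=
    ⟨mapsTo_component hd, injOn_component hd, surjOn_component⟩
  exact ⟨hbij, hbij.ncard_eq ▸ ncard_setOf_isTransversal hd.2.1⟩

end Secluded
end
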